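/- arXiv:2409.14641 — 3 statements merged into one kernel-verified Lean document; each statement's English description precedes it below -/
import Mathlib

section
/- Let m ≥ 1 and k ≥ 0 be integers. The composition operator C on L²(μ) is k-quasi-m-isometric if and only if ∑_{j=0}^{m} (−1)^j binom(m,j) h_{n+k+j}(x) = 0 for every x ∈ X and every n ∈ ℤ₊. -/
open MeasureTheory Finset

noncomputable section

/-- `B_m(T) = ∑_{j=0}^m (-1)^j C(m,j) T*^{m-j} T^{m-j}`. -/
def BmOp {H : Type*} [NormedAddCommGroup H] [InnerProductSpace ℂ H] [CompleteSpace H]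
    (m : ℕ) (T : H →L[ℂ] H) : H →L[ℂ] H :=
  ∑ j ∈ Finset.range (m + 1), ((-1 : ℂ) ^ j * (m.choose j : ℂ)) •
    ((ContinuousLinearMap.adjoint T) ^ (m - j) * T ^ (m - j))

/-- `T` is a `k`-quasi-`m`-isometry, i.e. `T*^k B_m(T) T^k = 0`. -/
def IsQuasiIso {H : Type*} [NormedAddCommGroup H] [InnerProductSpace ℂ H] [CompleteSpace H]
    (k m : ℕ) (T : H →L[ℂ] H) : Prop :=
  (ContinuousLinearMap.adjoint T) ^ k * BmOp m T * T ^ k = 0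

/-- The Radon–Nikodym derivative `h_p` of `μ ∘ φ^{-p}` with respect to `μ` in the discrete
setting: `h_p(x) = μ(φ^{-p}({x}))/μ({x})`. -/
def hRN {X : Type*} [MeasurableSpace X] (μ : Measure X) (φ : X → X) (p : ℕ) (x : X) : ℝ :=
  (μ ((φ^[p]) ⁻¹' {x})).toReal / (μ {x}).toReal

/-! Up to the sign `(-1)^m`, `⟪T*^k B_m(T) T^k f, f⟫ = ∑_j (-1)^j binom(m,j) ‖T^{k+j} f‖²`, and on a
complex Hilbert space an operator vanishes iff its quadratic form does. For a composition operator
on a discrete space, `‖C^p f‖² = ∑_y |f y|² μ(φ^{-p}{y}) = ∑_y |f y|² h_p(y) μ{y}`, so this form is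
a sum of the `|f y|²` with weights `μ{y} ∑_j (-1)^j binom(m,j) h_{k+j}(y)`; testing it on the
indicators of points shows that it vanishes iff every weight does. The shifts `n > 0` come for free
because `T*^{n+k} B_m(T) T^{n+k} = T*^n (T*^k B_m(T) T^k) T^n`. -/
theorem sum_range_neg_one_pow_mul_choose_reflect {R : Type*} [CommRing R] (m : ℕ) (w : ℕ → R) :
    ∑ j ∈ range (m + 1), (-1 : R) ^ j * m.choose j * w (m - j) =
      (-1) ^ m * ∑ j ∈ range (m + 1), (-1 : R) ^ j * m.choose j * w j := by
  rw [← sum_range_reflect, mul_sum]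
  refine sum_congr rfl fun j hj => ?_
  have hjm : j ≤ m := Nat.lt_succ_iff.mp (mem_range.mp hj)
  have hsign : (-1 : R) ^ m = (-1) ^ (m - j) * (-1) ^ j := by rw [← pow_add, Nat.sub_add_cancel hjm]
  rw [add_tsub_cancel_right, Nat.sub_sub_self hjm, Nat.choose_symm hjm, hsign]
  have hsq : (-1 : R) ^ j * (-1) ^ j = 1 := by rw [← pow_add]; exact Even.neg_one_pow ⟨j, rfl⟩
  linear_combination -((m.choose j : R) * w j * (-1) ^ (m - j)) * hsq

section QuasiIsometry

variable {H : Type*} [NormedAddCommGroup H] [InnerProductSpace ℂ H] [CompleteSpace H]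

theorem ContinuousLinearMap.adjoint_pow (T : H →L[ℂ] H) (p : ℕ) :
    ContinuousLinearMap.adjoint T ^ p = ContinuousLinearMap.adjoint (T ^ p) := by
  simp only [← ContinuousLinearMap.star_eq_adjoint, star_pow]

theorem inner_quasiIsoOp_apply_self (k m : ℕ) (T : H →L[ℂ] H) (f : H) :
    inner ℂ ((ContinuousLinearMap.adjoint T ^ k * BmOp m T * T ^ k) f) f =
      ((∑ j ∈ range (m + 1), (-1 : ℝ) ^ j * m.choose j * ‖(T ^ (k + (m - j))) f‖ ^ 2 : ℝ) : ℂ) := by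
  rw [mul_apply_eq_comp, mul_apply_eq_comp, ContinuousLinearMap.adjoint_pow,
    ContinuousLinearMap.adjoint_inner_left, BmOp, _root_.sum_apply, sum_inner,
    Complex.ofReal_sum]
  refine sum_congr rfl fun j _ => ?_
  rw [smul_apply, inner_smul_left, mul_apply_eq_comp, ContinuousLinearMap.adjoint_pow,
    ContinuousLinearMap.adjoint_inner_left, ← mul_apply_eq_comp, ← pow_add,
    inner_self_eq_norm_sq_to_K, add_comm]
  simp

theorem isQuasiIso_iff_forall_sum_norm_sq (k m : ℕ) (T : H →L[ℂ] H) :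
    IsQuasiIso k m T ↔
      ∀ f : H, ∑ j ∈ range (m + 1), (-1 : ℝ) ^ j * m.choose j * ‖(T ^ (k + j)) f‖ ^ 2 = 0 := by
  rw [IsQuasiIso, ← ContinuousLinearMap.coe_inj, ContinuousLinearMap.toLinearMap_zero,
    ← inner_map_self_eq_zero]
  refine forall_congr' fun f => ?_
  rw [ContinuousLinearMap.coe_coe, inner_quasiIsoOp_apply_self, Complex.ofReal_eq_zero,
    sum_range_neg_one_pow_mul_choose_reflect m fun i => ‖(T ^ (k + i)) f‖ ^ 2]
  simp

theorem IsQuasiIso.add_left {k m : ℕ} {T : H →L[ℂ] H} (h : IsQuasiIso k m T) (n : ℕ) :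
    IsQuasiIso (n + k) m T := by
  rw [IsQuasiIso] at h ⊢
  calc ContinuousLinearMap.adjoint T ^ (n + k) * BmOp m T * T ^ (n + k)
      = ContinuousLinearMap.adjoint T ^ n *
          (ContinuousLinearMap.adjoint T ^ k * BmOp m T * T ^ k) * T ^ n := by
        rw [pow_add, pow_add, pow_mul_comm T n k]
        simp only [mul_assoc]
    _ = 0 := by rw [h, mul_zero, zero_mul]

end QuasiIsometry

theorem MeasureTheory.L2.norm_sq_eq_integral_norm_sq {α 𝕜 : Type*} [MeasurableSpace α]
    {μ : Measure α} [RCLike 𝕜] (f : Lp 𝕜 2 μ) : ‖f‖ ^ 2 = ∫ x, ‖f x‖ ^ 2 ∂μ := by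
  have h : ((‖f‖ ^ 2 : ℝ) : 𝕜) = ∫ x, ((‖f x‖ ^ 2 : ℝ) : 𝕜) ∂μ := by
    simpa only [inner_self_eq_norm_sq_to_K, RCLike.ofReal_pow] using L2.inner_def (𝕜 := 𝕜) f f
  exact_mod_cast h.trans integral_ofReal

section Discrete

variable {X : Type*} [MeasurableSpace X] [Countable X] {μ : Measure X}

theorem MeasureTheory.hasSum_integral_countable [MeasurableSingletonClass X] {E : Type*}
    [NormedAddCommGroup E] [NormedSpace ℝ E] [CompleteSpace E] {f : X → E}
    (hf : Integrable f μ) : HasSum (fun x => μ.real {x} • f x) (∫ x, f x ∂μ) := by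
  rw [← Measure.sum_smul_dirac μ] at hf ⊢
  convert hasSum_integral_measure hf using 1
  ext x
  rw [integral_smul_measure, integral_dirac, Measure.sum_smul_dirac, measureReal_def]

theorem MeasureTheory.L2.hasSum_norm_sq_of_eq_comp [MeasurableSingletonClass X] (ψ : X → X)
    {f g : Lp ℂ 2 μ} (hg : ∀ x, g x = f (ψ x)) :
    HasSum (fun y => μ.real (ψ ⁻¹' {y}) * ‖f y‖ ^ 2) (‖g‖ ^ 2) := by
  have hψ : Measurable ψ := measurable_of_countable ψ
  have hf : AEStronglyMeasurable (fun y => ‖f y‖ ^ 2) (μ.map ψ) :=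
    (measurable_of_countable _).aestronglyMeasurable
  have hgf : (fun x => ‖g x‖ ^ 2) = fun x => ‖f (ψ x)‖ ^ 2 := funext fun x => by rw [hg]
  have hint : Integrable (fun y => ‖f y‖ ^ 2) (μ.map ψ) := by
    rw [integrable_map_measure hf hψ.aemeasurable, Function.comp_def, ← hgf]
    exact (memLp_two_iff_integrable_sq_norm (Lp.aestronglyMeasurable g)).mp (Lp.memLp g)
  rw [L2.norm_sq_eq_integral_norm_sq, hgf, ← integral_map hψ.aemeasurable hf]
  simpa only [map_measureReal_apply hψ (measurableSet_singleton _), smul_eq_mul] using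
    hasSum_integral_countable hint

theorem eq_of_ae_eq_of_measure_singleton_ne_zero {α : Type*} (hμ : ∀ x, μ {x} ≠ 0)
    {f g : X → α} (h : f =ᵐ[μ] g) : f = g :=
  funext fun x => ae_iff_of_countable.mp h x (hμ x)

theorem norm_sq_indicatorConstLp_singleton_one [MeasurableSingletonClass X]
    (hμ : ∀ x, μ {x} ≠ 0) (x : X) (hx : μ {x} ≠ ⊤) (y : X) :
    ‖indicatorConstLp 2 (measurableSet_singleton x) hx (1 : ℂ) y‖ ^ 2 =
      ({x} : Set X).indicator 1 y := by
  rw [eq_of_ae_eq_of_measure_singleton_ne_zero hμ indicatorConstLp_coeFn]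
  by_cases hy : y = x <;> simp [hy]

end Discrete

def IsCompositionOperator {X : Type*} [MeasurableSpace X] (μ : Measure X) (φ : X → X)
    (C : Lp ℂ 2 μ →L[ℂ] Lp ℂ 2 μ) : Prop :=
  ∀ f : Lp ℂ 2 μ, (C f : X → ℂ) =ᵐ[μ] fun x => f (φ x)

namespace IsCompositionOperator

variable {X : Type*} [MeasurableSpace X] [Countable X] {μ : Measure X} {φ : X → X}
  {C : Lp ℂ 2 μ →L[ℂ] Lp ℂ 2 μ}

theorem pow_apply (hμ : ∀ x, μ {x} ≠ 0) (hC : IsCompositionOperator μ φ C) (p : ℕ)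
    (f : Lp ℂ 2 μ) (x : X) : (C ^ p) f x = f (φ^[p] x) := by
  induction p generalizing f x with
  | zero => rfl
  | succ p ih =>
    rw [pow_succ, mul_apply_eq_comp, ih, eq_of_ae_eq_of_measure_singleton_ne_zero hμ (hC f),
      Function.iterate_succ_apply']

variable [MeasurableSingletonClass X]

theorem hasSum_norm_sq_pow (hμ : ∀ x, μ {x} ≠ 0) (hC : IsCompositionOperator μ φ C) (p : ℕ)
    (f : Lp ℂ 2 μ) : HasSum (fun y => μ.real (φ^[p] ⁻¹' {y}) * ‖f y‖ ^ 2) (‖(C ^ p) f‖ ^ 2) :=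
  L2.hasSum_norm_sq_of_eq_comp _ (hC.pow_apply hμ p f)

theorem norm_sq_pow_indicatorConstLp (hμ : ∀ x, μ {x} ≠ 0) (hC : IsCompositionOperator μ φ C)
    (p : ℕ) (x : X) (hx : μ {x} ≠ ⊤) :
    ‖(C ^ p) (indicatorConstLp 2 (measurableSet_singleton x) hx (1 : ℂ))‖ ^ 2 =
      μ.real (φ^[p] ⁻¹' {x}) := by
  refine (hC.hasSum_norm_sq_pow hμ p _).unique ?_
  simp_rw [norm_sq_indicatorConstLp_singleton_one hμ x hx]
  simpa using hasSum_single (f := fun y => μ.real (φ^[p] ⁻¹' {y}) * ({x} : Set X).indicator 1 y) x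
    fun y hy => by simp [hy]

theorem isQuasiIso_iff (hμ : ∀ x, μ {x} ≠ 0) (hμ_top : ∀ x, μ {x} ≠ ⊤)
    (hC : IsCompositionOperator μ φ C) (k m : ℕ) :
    IsQuasiIso k m C ↔ ∀ x, ∑ j ∈ range (m + 1),
      (-1 : ℝ) ^ j * m.choose j * μ.real (φ^[k + j] ⁻¹' {x}) = 0 := by
  rw [isQuasiIso_iff_forall_sum_norm_sq]
  constructor
  · intro h x
    simpa only [hC.norm_sq_pow_indicatorConstLp hμ _ x (hμ_top x)] using
      h (indicatorConstLp 2 (measurableSet_singleton x) (hμ_top x) 1)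
  · intro h f
    have hsum := hasSum_sum fun j (_ : j ∈ range (m + 1)) =>
      (hC.hasSum_norm_sq_pow hμ (k + j) f).mul_left ((-1 : ℝ) ^ j * m.choose j)
    refine hsum.unique ?_
    convert hasSum_zero with y
    simp_rw [← mul_assoc, ← sum_mul, h y, zero_mul]

end IsCompositionOperator

theorem sum_mul_hRN {X : Type*} [MeasurableSpace X] (μ : Measure X) (φ : X → X) (s : Finset ℕ)
    (c : ℕ → ℝ) (p : ℕ) (x : X) :
    ∑ j ∈ s, c j * hRN μ φ (p + j) x = (∑ j ∈ s, c j * μ.real (φ^[p + j] ⁻¹' {x})) / μ.real {x} := by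
  simp only [hRN, sum_div, mul_div_assoc, measureReal_def]

theorem stmt1_general
    (X : Type*) [MeasurableSpace X] [Countable X]
    (hmeas : ∀ s : Set X, MeasurableSet s)
    (φ : X → X)
    (μ : Measure X)
    (hμ : ∀ x : X, 0 < μ {x} ∧ μ {x} < ⊤)
    (C : Lp ℂ 2 μ →L[ℂ] Lp ℂ 2 μ)
    (hC : ∀ f : Lp ℂ 2 μ, (C f : X → ℂ) =ᵐ[μ] fun x => f (φ x))
    (m k : ℕ) :
    IsQuasiIso k m C ↔
      ∀ (x : X) (n : ℕ),
        ∑ j ∈ Finset.range (m + 1),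
          (-1 : ℝ) ^ j * (m.choose j : ℝ) * hRN μ φ (n + k + j) x = 0 := by
  have : MeasurableSingletonClass X := ⟨fun x => hmeas _⟩
  have hμ₀ : ∀ x, μ {x} ≠ 0 := fun x => (hμ x).1.ne'
  have hμ_top : ∀ x, μ {x} ≠ ⊤ := fun x => (hμ x).2.ne
  have hμ_real : ∀ x, μ.real {x} ≠ 0 := fun x => ENNReal.toReal_ne_zero.mpr ⟨hμ₀ x, hμ_top x⟩
  have hC' : IsCompositionOperator μ φ C := hC
  simp only [sum_mul_hRN, div_eq_zero_iff, hμ_real, or_false]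
  constructor
  · intro hQ x n
    exact (hC'.isQuasiIso_iff hμ₀ hμ_top (n + k) m).mp (hQ.add_left n) x
  · intro h
    exact (hC'.isQuasiIso_iff hμ₀ hμ_top k m).mpr fun x => by simpa using h x 0

theorem stmt1
    (X : Type*) [MeasurableSpace X] [Countable X] [Infinite X]
    (hmeas : ∀ s : Set X, MeasurableSet s)
    (φ : X → X)
    (μ : Measure X) [SigmaFinite μ]
    (hμ : ∀ x : X, 0 < μ {x} ∧ μ {x} < ⊤)
    (hns : μ.map φ ≪ μ)
    (C : Lp ℂ 2 μ →L[ℂ] Lp ℂ 2 μ)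
    (hC : ∀ f : Lp ℂ 2 μ, (C f : X → ℂ) =ᵐ[μ] fun x => f (φ x))
    (m k : ℕ) (hm : 1 ≤ m) :
    IsQuasiIso k m C ↔
      ∀ (x : X) (n : ℕ),
        ∑ j ∈ Finset.range (m + 1),
          (-1 : ℝ) ^ j * (m.choose j : ℝ) * hRN μ φ (n + k + j) x = 0 :=
  stmt1_general X hmeas φ μ hμ C hC m k
end
end

section
/- Let m ≥ 1 and k ≥ 0 be integers and assume ∑_{r=1}^{κ} ∑_{i=1}^{η_r} ∑_{j=1}^{m+k} μ({x^r_{i,j}}) < ∞. Then ∑_{r=1}^{κ} μ({x_r}) ∑_{p=0}^{m} (−1)^p binom(m,p) h_{p+k}(x_r) = −∑_{r=1}^{κ} ∑_{i=1}^{η_r} ∑_{p=0}^{m−1} (−1)^p binom(m−1,p) μ({x^r_{i,p+k+1}}) = −∑_{r=1}^{κ} ∑_{i=1}^{η_r} ∑_{p=0}^{m−1} (−1)^p binom(m−1,p) μ({x^r_{i,1}}) h_{p+k}(x^r_{i,1}). -/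
/-!
Write `C` for the circuit and `L j` for the `j`-th level `{x^r_{i,j}}` of the branches. In the
discrete setting `μ{x} h_q(x) = μ(φ^{-q}{x})`, so the left-hand side only involves
`G q = μ(φ^{-q} C)`. Since `φ^{-1} C = C ∪ L 1` and `φ^{-1}(L j) = L (j + 1)`, the set
`φ^{-(q+1)} C` is the disjoint union of `φ^{-q} C` and `L (q + 1)`: the forward difference of `G`
is `q ↦ μ(L (q + 1))`. An alternating binomial sum of order `m` is, up to sign, an `m`-th forward
difference, hence one of order `m - 1` of the difference sequence, which gives the first identity.
The second one is pointwise, because `φ^{-q}{x^r_{i,1}} = {x^r_{i,q+1}}`.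
-/

open MeasureTheory Finset

noncomputable section

/-- Sum of a real family over the branch indices `i ∈ J_{η r} = {i : 1 ≤ i ≤ η r}`
(a `tsum`, since `η r` may be `∞`). -/
def bsumR (η : ℕ → ℕ∞) (r : ℕ) (f : ℕ → ℝ) : ℝ :=
  ∑' i : ℕ, Set.indicator {i : ℕ | 1 ≤ i ∧ (i : ℕ∞) ≤ η r} f i

/-- Sum of an `ℝ≥0∞`-valued family over the branch indices `i ∈ J_{η r}`. -/
def bsumE (η : ℕ → ℕ∞) (r : ℕ) (f : ℕ → ENNReal) : ENNReal :=
  ∑' i : ℕ, Set.indicator {i : ℕ | 1 ≤ i ∧ (i : ℕ∞) ≤ η r} f i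

open scoped ENNReal

theorem alternating_sum_range_choose_mul_eq_fwdDiff_iter {R : Type*} [CommRing R] (g : ℕ → R)
    (n : ℕ) :
    ∑ p ∈ range (n + 1), (-1) ^ p * (n.choose p : R) * g p = (-1) ^ n * (fwdDiff 1)^[n] g 0 := by
  rw [fwdDiff_iter_eq_sum_shift, mul_sum]
  refine sum_congr rfl fun p hp => ?_
  have hsign : (-1 : R) ^ n * (-1) ^ (n - p) = (-1) ^ p := by
    rw [← pow_add, show n + (n - p) = p + 2 * (n - p) by grind, pow_add, pow_mul]
    simp
  simp only [zsmul_eq_mul, zero_add, smul_eq_mul, mul_one]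
  push_cast
  rw [← hsign]
  ring

theorem alternating_sum_range_choose_succ_mul {R : Type*} [CommRing R] (g : ℕ → R) (n : ℕ) :
    ∑ p ∈ range (n + 2), (-1) ^ p * ((n + 1).choose p : R) * g p =
      -∑ p ∈ range (n + 1), (-1) ^ p * (n.choose p : R) * (g (p + 1) - g p) := by
  calc _ = -((-1) ^ n * (fwdDiff 1)^[n] (fwdDiff 1 g) 0) := by
        rw [alternating_sum_range_choose_mul_eq_fwdDiff_iter, Function.iterate_succ_apply, pow_succ]
        ring
    _ = _ := by rw [← alternating_sum_range_choose_mul_eq_fwdDiff_iter]; rfl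

theorem exists_residue_add_one_eq {κ : ℕ} {Φ₂ : ℤ → ℕ}
    (hΦ₂ : ∀ q : ℤ, (1 ≤ Φ₂ q ∧ Φ₂ q ≤ κ) ∧ (κ : ℤ) ∣ q - (Φ₂ q : ℤ))
    {s : ℕ} (hs₁ : 1 ≤ s) (hs₂ : s ≤ κ) : ∃ r, 1 ≤ r ∧ r ≤ κ ∧ Φ₂ (r + 1) = s := by
  obtain ⟨⟨hr₁, hr₂⟩, hr⟩ := hΦ₂ (s - 1)
  obtain ⟨⟨ht₁, ht₂⟩, ht⟩ := hΦ₂ (Φ₂ (s - 1) + 1)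
  have hdvd : (κ : ℤ) ∣ Φ₂ (Φ₂ (s - 1) + 1) - s := by
    rw [← dvd_neg]
    convert hr.add ht using 1
    ring
  have := Int.eq_zero_of_abs_lt_dvd hdvd (by rw [abs_lt]; omega)
  exact ⟨Φ₂ (s - 1), hr₁, hr₂, by omega⟩

section Graph

variable {X : Type*}

def branches (η : ℕ → ℕ∞) (r : ℕ) : Set ℕ := {i | 1 ≤ i ∧ (i : ℕ∞) ≤ η r}

def circuit (κ : ℕ) (xc : ℕ → X) : Set X := ⋃ r ∈ Icc 1 κ, {xc r}

def level (κ : ℕ) (η : ℕ → ℕ∞) (xb : ℕ → ℕ → ℕ → X) (j : ℕ) : Set X :=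
  ⋃ r ∈ Icc 1 κ, ⋃ i ∈ branches η r, {xb r i j}

theorem mem_circuit {κ : ℕ} {xc : ℕ → X} {z : X} :
    z ∈ circuit κ xc ↔ ∃ r, (1 ≤ r ∧ r ≤ κ) ∧ z = xc r := by
  simp [circuit]

theorem mem_level {κ : ℕ} {η : ℕ → ℕ∞} {xb : ℕ → ℕ → ℕ → X} {j : ℕ} {z : X} :
    z ∈ level κ η xb j ↔ ∃ r, (1 ≤ r ∧ r ≤ κ) ∧ ∃ i ∈ branches η r, z = xb r i j := by
  simp [level]

structure IsCycleWithBranches (κ : ℕ) (η : ℕ → ℕ∞) (xc : ℕ → X) (xb : ℕ → ℕ → ℕ → X)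
    (φ : X → X) : Prop where
  xc_inj : ∀ r r' : ℕ, 1 ≤ r → r ≤ κ → 1 ≤ r' → r' ≤ κ → xc r = xc r' → r = r'
  xc_ne_xb : ∀ r r' i j : ℕ, 1 ≤ r → r ≤ κ → 1 ≤ r' → r' ≤ κ → 1 ≤ i → (i : ℕ∞) ≤ η r' →
    1 ≤ j → xc r ≠ xb r' i j
  xb_inj : ∀ r i j r' i' j' : ℕ, 1 ≤ r → r ≤ κ → 1 ≤ i → (i : ℕ∞) ≤ η r → 1 ≤ j →
    1 ≤ r' → r' ≤ κ → 1 ≤ i' → (i' : ℕ∞) ≤ η r' → 1 ≤ j' →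
    xb r i j = xb r' i' j' → r = r' ∧ i = i' ∧ j = j'
  cover : ∀ x : X, (∃ r : ℕ, 1 ≤ r ∧ r ≤ κ ∧ x = xc r) ∨
    ∃ r i j : ℕ, 1 ≤ r ∧ r ≤ κ ∧ 1 ≤ i ∧ (i : ℕ∞) ≤ η r ∧ 1 ≤ j ∧ x = xb r i j
  map_xb_succ : ∀ r i j : ℕ, 1 ≤ r → r ≤ κ → 1 ≤ i → (i : ℕ∞) ≤ η r → 1 ≤ j →
    φ (xb r i (j + 1)) = xb r i j
  map_xb_one : ∀ r i : ℕ, 1 ≤ r → r ≤ κ → 1 ≤ i → (i : ℕ∞) ≤ η r → φ (xb r i 1) = xc r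
  map_xc : ∀ s : ℕ, 1 ≤ s → s ≤ κ → φ (xc s) ∈ circuit κ xc

namespace IsCycleWithBranches

variable {κ : ℕ} {η : ℕ → ℕ∞} {xc : ℕ → X} {xb : ℕ → ℕ → ℕ → X} {φ : X → X}

theorem xb_notMem_circuit (hG : IsCycleWithBranches κ η xc xb φ) {r i j : ℕ} (hr₁ : 1 ≤ r)
    (hr₂ : r ≤ κ) (hi : i ∈ branches η r) (hj : 1 ≤ j) : xb r i j ∉ circuit κ xc := by
  rintro h
  obtain ⟨s, ⟨hs₁, hs₂⟩, hs⟩ := mem_circuit.mp h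
  exact hG.xc_ne_xb s r i j hs₁ hs₂ hr₁ hr₂ hi.1 hi.2 hj hs.symm

theorem preimage_xb (hG : IsCycleWithBranches κ η xc xb φ) {r i j : ℕ} (hr₁ : 1 ≤ r)
    (hr₂ : r ≤ κ) (hi : i ∈ branches η r) (hj : 1 ≤ j) :
    φ ⁻¹' {xb r i j} = {xb r i (j + 1)} := by
  ext z
  simp only [Set.mem_preimage, Set.mem_singleton_iff]
  refine ⟨fun hz => ?_, fun hz => hz ▸ hG.map_xb_succ r i j hr₁ hr₂ hi.1 hi.2 hj⟩
  rcases hG.cover z with ⟨s, hs₁, hs₂, rfl⟩ | ⟨r', i', j', hr₁', hr₂', hi₁', hi₂', hj', rfl⟩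
  · exact absurd (hz ▸ hG.map_xc s hs₁ hs₂) (hG.xb_notMem_circuit hr₁ hr₂ hi hj)
  rcases j' with _ | _ | j'
  · omega
  · rw [hG.map_xb_one r' i' hr₁' hr₂' hi₁' hi₂'] at hz
    exact absurd hz (hG.xc_ne_xb r' r i j hr₁' hr₂' hr₁ hr₂ hi.1 hi.2 hj)
  · rw [hG.map_xb_succ r' i' (j' + 1) hr₁' hr₂' hi₁' hi₂' (by omega)] at hz
    obtain ⟨rfl, rfl, rfl⟩ :=
      hG.xb_inj _ _ _ _ _ _ hr₁' hr₂' hi₁' hi₂' (by omega) hr₁ hr₂ hi.1 hi.2 hj hz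
    rfl

theorem iterate_preimage_xb (hG : IsCycleWithBranches κ η xc xb φ) {r i : ℕ} (hr₁ : 1 ≤ r)
    (hr₂ : r ≤ κ) (hi : i ∈ branches η r) (q : ℕ) {j : ℕ} (hj : 1 ≤ j) :
    φ^[q] ⁻¹' {xb r i j} = {xb r i (j + q)} := by
  induction q generalizing j with
  | zero => rfl
  | succ q ih =>
    rw [Function.iterate_succ, Set.preimage_comp, ih hj, hG.preimage_xb hr₁ hr₂ hi (by omega),
      add_assoc]

theorem iterate_preimage_level (hG : IsCycleWithBranches κ η xc xb φ) (q : ℕ) {j : ℕ}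
    (hj : 1 ≤ j) : φ^[q] ⁻¹' level κ η xb j = level κ η xb (j + q) := by
  simp only [level, Set.preimage_iUnion₂]
  refine Set.iUnion₂_congr fun r hr => Set.iUnion₂_congr fun i hi => ?_
  obtain ⟨hr₁, hr₂⟩ := mem_Icc.mp hr
  exact hG.iterate_preimage_xb hr₁ hr₂ hi q hj

theorem preimage_circuit (hG : IsCycleWithBranches κ η xc xb φ) :
    φ ⁻¹' circuit κ xc = circuit κ xc ∪ level κ η xb 1 := by
  ext z
  simp only [Set.mem_preimage, Set.mem_union]
  constructor
  · intro hz
    rcases hG.cover z with ⟨s, hs₁, hs₂, rfl⟩ | ⟨r, i, j, hr₁, hr₂, hi₁, hi₂, hj, rfl⟩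
    · exact Or.inl (mem_circuit.mpr ⟨s, ⟨hs₁, hs₂⟩, rfl⟩)
    rcases j with _ | _ | j
    · omega
    · exact Or.inr (mem_level.mpr ⟨r, ⟨hr₁, hr₂⟩, i, ⟨hi₁, hi₂⟩, rfl⟩)
    · rw [hG.map_xb_succ r i (j + 1) hr₁ hr₂ hi₁ hi₂ (by omega)] at hz
      exact absurd hz (hG.xb_notMem_circuit hr₁ hr₂ ⟨hi₁, hi₂⟩ (by omega))
  · rintro (hz | hz)
    · obtain ⟨s, ⟨hs₁, hs₂⟩, rfl⟩ := mem_circuit.mp hz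
      exact hG.map_xc s hs₁ hs₂
    · obtain ⟨r, ⟨hr₁, hr₂⟩, i, hi, rfl⟩ := mem_level.mp hz
      rw [hG.map_xb_one r i hr₁ hr₂ hi.1 hi.2]
      exact mem_circuit.mpr ⟨r, ⟨hr₁, hr₂⟩, rfl⟩

theorem disjoint_circuit_level (hG : IsCycleWithBranches κ η xc xb φ) {j : ℕ} (hj : 1 ≤ j) :
    Disjoint (circuit κ xc) (level κ η xb j) := by
  refine Set.disjoint_right.mpr fun z hz => ?_
  obtain ⟨r, ⟨hr₁, hr₂⟩, i, hi, rfl⟩ := mem_level.mp hz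
  exact hG.xb_notMem_circuit hr₁ hr₂ hi hj

theorem iterate_succ_preimage_circuit (hG : IsCycleWithBranches κ η xc xb φ) (q : ℕ) :
    φ^[q + 1] ⁻¹' circuit κ xc = φ^[q] ⁻¹' circuit κ xc ∪ φ^[q] ⁻¹' level κ η xb 1 := by
  rw [Function.iterate_succ', Set.preimage_comp, hG.preimage_circuit, Set.preimage_union]

end IsCycleWithBranches

end Graph

theorem indicator_toReal {ι : Type*} (s : Set ι) (f : ι → ℝ≥0∞) :
    s.indicator (fun i => (f i).toReal) = fun i => (s.indicator f i).toReal :=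
  Set.indicator_comp_of_zero ENNReal.toReal_zero

section BranchSums

variable {η : ℕ → ℕ∞} {r : ℕ}

theorem bsumR_eq_tsum_indicator (f : ℕ → ℝ) :
    bsumR η r f = ∑' i, (branches η r).indicator f i := rfl

theorem bsumE_eq_tsum_indicator (f : ℕ → ℝ≥0∞) :
    bsumE η r f = ∑' i, (branches η r).indicator f i := rfl

theorem bsumR_congr {f g : ℕ → ℝ} (h : ∀ i ∈ branches η r, f i = g i) :
    bsumR η r f = bsumR η r g := by
  rw [bsumR_eq_tsum_indicator, bsumR_eq_tsum_indicator, Set.indicator_congr h]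

theorem bsumE_mono {f g : ℕ → ℝ≥0∞} (h : ∀ i, f i ≤ g i) : bsumE η r f ≤ bsumE η r g :=
  ENNReal.tsum_le_tsum fun _ => Set.indicator_le_indicator (h _)

theorem bsumR_toReal {f : ℕ → ℝ≥0∞} (hf : ∀ i, f i ≠ ⊤) :
    bsumR η r (fun i => (f i).toReal) = (bsumE η r f).toReal := by
  rw [bsumE_eq_tsum_indicator, ENNReal.tsum_toReal_eq, bsumR_eq_tsum_indicator]
  · exact tsum_congr fun i => congr_fun (indicator_toReal _ f) i
  · intro i
    by_cases hi : i ∈ branches η r <;> simp [hi, hf]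

theorem summable_indicator_toReal {f : ℕ → ℝ≥0∞} (hf : bsumE η r f ≠ ⊤) :
    Summable ((branches η r).indicator fun i => (f i).toReal) := by
  rw [indicator_toReal]
  exact ENNReal.summable_toReal hf

theorem bsumR_sum_mul {ι : Type*} (s : Finset ι) (c : ι → ℝ) {f : ι → ℕ → ℝ}
    (hf : ∀ p ∈ s, Summable ((branches η r).indicator (f p))) :
    bsumR η r (fun i => ∑ p ∈ s, c p * f p i) = ∑ p ∈ s, c p * bsumR η r (f p) := by
  have hind : ∀ i, (branches η r).indicator (fun i => ∑ p ∈ s, c p * f p i) i =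
      ∑ p ∈ s, c p * (branches η r).indicator (f p) i := by
    intro i
    by_cases hi : i ∈ branches η r <;> simp [hi]
  simp only [bsumR_eq_tsum_indicator]
  rw [tsum_congr hind, Summable.tsum_finsetSum fun p hp => (hf p hp).mul_left (c p)]
  exact sum_congr rfl fun p _ => tsum_mul_left

end BranchSums

theorem toReal_mul_hRN {X : Type*} [MeasurableSpace X] {μ : Measure X} (φ : X → X) (q : ℕ)
    {x : X} (h₀ : μ {x} ≠ 0) (h_top : μ {x} ≠ ⊤) :
    (μ {x}).toReal * hRN μ φ q x = (μ (φ^[q] ⁻¹' {x})).toReal :=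
  mul_div_cancel₀ _ (ENNReal.toReal_ne_zero.mpr ⟨h₀, h_top⟩)

namespace IsCycleWithBranches

variable {X : Type*} [MeasurableSpace X] {μ : Measure X}
  {κ : ℕ} {η : ℕ → ℕ∞} {xc : ℕ → X} {xb : ℕ → ℕ → ℕ → X} {φ : X → X}

theorem toReal_measure_xb_mul_hRN (hG : IsCycleWithBranches κ η xc xb φ) {r i : ℕ}
    (hr₁ : 1 ≤ r) (hr₂ : r ≤ κ) (hi : i ∈ branches η r) (h₀ : μ {xb r i 1} ≠ 0)
    (h_top : μ {xb r i 1} ≠ ⊤) (q : ℕ) :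
    (μ {xb r i 1}).toReal * hRN μ φ q (xb r i 1) = (μ {xb r i (q + 1)}).toReal := by
  rw [toReal_mul_hRN φ q h₀ h_top, hG.iterate_preimage_xb hr₁ hr₂ hi q le_rfl, add_comm]

variable [DiscreteMeasurableSpace X]

theorem measure_level (hG : IsCycleWithBranches κ η xc xb φ) {j : ℕ} (hj : 1 ≤ j) :
    μ (level κ η xb j) = ∑ r ∈ Icc 1 κ, bsumE η r (fun i => μ {xb r i j}) := by
  rw [level, measure_biUnion_finset _ fun _ _ => .of_discrete]
  · refine sum_congr rfl fun r hr => ?_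
    obtain ⟨hr₁, hr₂⟩ := mem_Icc.mp hr
    rw [measure_biUnion (Set.to_countable _) _ fun _ _ => .of_discrete, bsumE_eq_tsum_indicator]
    · exact _root_.tsum_subtype (branches η r) fun i => μ {xb r i j}
    intro i hi i' hi' hne
    exact Set.disjoint_singleton.mpr fun h =>
      hne (hG.xb_inj _ _ _ _ _ _ hr₁ hr₂ hi.1 hi.2 hj hr₁ hr₂ hi'.1 hi'.2 hj h).2.1
  · intro r hr r' hr' hne
    obtain ⟨hr₁, hr₂⟩ := mem_Icc.mp hr
    obtain ⟨hr₁', hr₂'⟩ := mem_Icc.mp hr'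
    refine Set.disjoint_left.mpr fun z hz hz' => hne ?_
    simp only [Set.mem_iUnion, Set.mem_singleton_iff] at hz hz'
    obtain ⟨i, hi, rfl⟩ := hz
    obtain ⟨i', hi', h⟩ := hz'
    exact (hG.xb_inj _ _ _ _ _ _ hr₁ hr₂ hi.1 hi.2 hj hr₁' hr₂' hi'.1 hi'.2 hj h).1

theorem bsumE_xb_ne_top (hG : IsCycleWithBranches κ η xc xb φ) {r j : ℕ} (hr : r ∈ Icc 1 κ)
    (hj : 1 ≤ j) (h : μ (level κ η xb j) ≠ ⊤) : bsumE η r (fun i => μ {xb r i j}) ≠ ⊤ := by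
  rw [hG.measure_level hj] at h
  exact ne_top_of_le_ne_top h
    (single_le_sum (f := fun r => bsumE η r fun i => μ {xb r i j}) (fun _ _ => zero_le) hr)

theorem measure_level_ne_top (hG : IsCycleWithBranches κ η xc xb φ) {N : ℕ}
    (hfin : ∑ r ∈ Icc 1 κ, bsumE η r (fun i => ∑ j ∈ Icc 1 N, μ {xb r i j}) < ⊤)
    {j : ℕ} (hj₁ : 1 ≤ j) (hj₂ : j ≤ N) : μ (level κ η xb j) ≠ ⊤ := by
  rw [hG.measure_level hj₁]
  refine ne_top_of_le_ne_top hfin.ne (sum_le_sum fun r _ => bsumE_mono fun i => ?_)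
  exact single_le_sum (f := fun j => μ {xb r i j}) (fun _ _ => zero_le) (mem_Icc.mpr ⟨hj₁, hj₂⟩)

theorem sum_measure_iterate_preimage_xc (hG : IsCycleWithBranches κ η xc xb φ) (q : ℕ) :
    ∑ r ∈ Icc 1 κ, μ (φ^[q] ⁻¹' {xc r}) = μ (φ^[q] ⁻¹' circuit κ xc) := by
  rw [circuit, Set.preimage_iUnion₂, measure_biUnion_finset _ fun _ _ => .of_discrete]
  intro r hr r' hr' hne
  obtain ⟨hr₁, hr₂⟩ := mem_Icc.mp hr
  obtain ⟨hr₁', hr₂'⟩ := mem_Icc.mp hr'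
  exact (Set.disjoint_singleton.mpr fun h => hne (hG.xc_inj r r' hr₁ hr₂ hr₁' hr₂' h)).preimage _

theorem measure_iterate_succ_preimage_circuit (hG : IsCycleWithBranches κ η xc xb φ) (q : ℕ) :
    μ (φ^[q + 1] ⁻¹' circuit κ xc) = μ (φ^[q] ⁻¹' circuit κ xc) + μ (level κ η xb (q + 1)) := by
  rw [hG.iterate_succ_preimage_circuit, measure_union _ .of_discrete,
    hG.iterate_preimage_level q le_rfl, add_comm 1]
  exact (hG.disjoint_circuit_level le_rfl).preimage _

theorem measure_iterate_preimage_circuit_ne_top (hG : IsCycleWithBranches κ η xc xb φ)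
    (h_top : ∀ x, μ {x} ≠ ⊤) {N : ℕ} (hN : ∀ j, 1 ≤ j → j ≤ N → μ (level κ η xb j) ≠ ⊤) :
    ∀ q ≤ N, μ (φ^[q] ⁻¹' circuit κ xc) ≠ ⊤
  | 0, _ => ne_top_of_le_ne_top (ENNReal.sum_ne_top.mpr fun r _ => h_top (xc r))
      (measure_biUnion_finset_le _ _)
  | q + 1, hq => by
    rw [hG.measure_iterate_succ_preimage_circuit]
    exact ENNReal.add_ne_top.mpr ⟨hG.measure_iterate_preimage_circuit_ne_top h_top hN q (by omega),
      hN (q + 1) (by omega) hq⟩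

theorem sum_toReal_mul_hRN_xc (hG : IsCycleWithBranches κ η xc xb φ) (h₀ : ∀ x, μ {x} ≠ 0)
    (h_top : ∀ x, μ {x} ≠ ⊤) {q : ℕ} (hq : μ (φ^[q] ⁻¹' circuit κ xc) ≠ ⊤) :
    ∑ r ∈ Icc 1 κ, (μ {xc r}).toReal * hRN μ φ q (xc r) = (μ (φ^[q] ⁻¹' circuit κ xc)).toReal := by
  have hle : ∀ r ∈ Icc 1 κ, μ (φ^[q] ⁻¹' {xc r}) ≤ μ (φ^[q] ⁻¹' circuit κ xc) := fun r hr =>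
    hG.sum_measure_iterate_preimage_xc q ▸
      single_le_sum (f := fun r => μ (φ^[q] ⁻¹' {xc r})) (fun _ _ => zero_le) hr
  simp_rw [toReal_mul_hRN φ q (h₀ _) (h_top _)]
  rw [← ENNReal.toReal_sum fun r hr => ne_top_of_le_ne_top hq (hle r hr),
    hG.sum_measure_iterate_preimage_xc]

theorem sum_measure_mul_alternating_hRN_xc (hG : IsCycleWithBranches κ η xc xb φ)
    (h₀ : ∀ x, μ {x} ≠ 0) (h_top : ∀ x, μ {x} ≠ ⊤) {m k : ℕ} (hm : 1 ≤ m)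
    (hlevel : ∀ j, 1 ≤ j → j ≤ m + k → μ (level κ η xb j) ≠ ⊤) :
    ∑ r ∈ Icc 1 κ, (μ {xc r}).toReal *
        ∑ p ∈ range (m + 1), (-1 : ℝ) ^ p * (m.choose p : ℝ) * hRN μ φ (p + k) (xc r) =
      -∑ p ∈ range m, (-1 : ℝ) ^ p * ((m - 1).choose p : ℝ) *
        (μ (level κ η xb (p + k + 1))).toReal := by
  obtain ⟨n, rfl⟩ : ∃ n, m = n + 1 := ⟨m - 1, by omega⟩
  have hfin := hG.measure_iterate_preimage_circuit_ne_top h_top hlevel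
  set G : ℕ → ℝ := fun q => (μ (φ^[q + k] ⁻¹' circuit κ xc)).toReal
  calc _ = ∑ p ∈ range (n + 2), (-1 : ℝ) ^ p * ((n + 1).choose p : ℝ) * G p := by
        simp_rw [mul_sum]
        rw [sum_comm]
        refine sum_congr rfl fun p hp => ?_
        rw [show G p = _ from (hG.sum_toReal_mul_hRN_xc h₀ h_top (hfin (p + k) (by grind))).symm,
          mul_sum]
        exact sum_congr rfl fun r _ => by ring
    _ = -∑ p ∈ range (n + 1), (-1 : ℝ) ^ p * (n.choose p : ℝ) * (G (p + 1) - G p) :=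
        alternating_sum_range_choose_succ_mul G n
    _ = _ := by
        refine congrArg Neg.neg (sum_congr rfl fun p hp => ?_)
        have hpk : p + k + 1 ≤ n + 1 + k := by grind
        simp only [G, add_right_comm p 1 k, hG.measure_iterate_succ_preimage_circuit]
        rw [ENNReal.toReal_add (hfin (p + k) (by omega)) (hlevel _ (by omega) hpk),
          add_sub_cancel_left, Nat.add_sub_cancel]

theorem sum_bsumR_measure_xb (hG : IsCycleWithBranches κ η xc xb φ) (h_top : ∀ x, μ {x} ≠ ⊤)
    (s : Finset ℕ) (c : ℕ → ℝ) {J : ℕ → ℕ} (hJ : ∀ p ∈ s, 1 ≤ J p)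
    (hlevel : ∀ p ∈ s, μ (level κ η xb (J p)) ≠ ⊤) :
    ∑ r ∈ Icc 1 κ, bsumR η r (fun i => ∑ p ∈ s, c p * (μ {xb r i (J p)}).toReal) =
      ∑ p ∈ s, c p * (μ (level κ η xb (J p))).toReal := by
  have hbranch : ∀ r ∈ Icc 1 κ, ∀ p ∈ s, bsumE η r (fun i => μ {xb r i (J p)}) ≠ ⊤ :=
    fun r hr p hp => hG.bsumE_xb_ne_top hr (hJ p hp) (hlevel p hp)
  rw [sum_congr rfl fun r hr => bsumR_sum_mul s c fun p hp =>
    summable_indicator_toReal (hbranch r hr p hp), sum_comm]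
  refine sum_congr rfl fun p hp => ?_
  rw [← mul_sum, hG.measure_level (hJ p hp), ENNReal.toReal_sum fun r hr => hbranch r hr p hp]
  simp only [bsumR_toReal fun i => h_top _]

end IsCycleWithBranches

theorem stmt5_general
    (κ : ℕ)
    (Φ₂ : ℤ → ℕ)
    (hΦ₂ : ∀ q : ℤ, (1 ≤ Φ₂ q ∧ Φ₂ q ≤ κ) ∧ (κ : ℤ) ∣ q - (Φ₂ q : ℤ))
    (X : Type*) [MeasurableSpace X]
    (hmeas : ∀ s : Set X, MeasurableSet s)
    (η : ℕ → ℕ∞)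
    (xc : ℕ → X) (xb : ℕ → ℕ → ℕ → X)
    (hinj₁ : ∀ r r' : ℕ, 1 ≤ r → r ≤ κ → 1 ≤ r' → r' ≤ κ → xc r = xc r' → r = r')
    (hinj₂ : ∀ r r' i j : ℕ, 1 ≤ r → r ≤ κ → 1 ≤ r' → r' ≤ κ → 1 ≤ i → (i : ℕ∞) ≤ η r' →
      1 ≤ j → xc r ≠ xb r' i j)
    (hinj₃ : ∀ r i j r' i' j' : ℕ, 1 ≤ r → r ≤ κ → 1 ≤ i → (i : ℕ∞) ≤ η r → 1 ≤ j →
      1 ≤ r' → r' ≤ κ → 1 ≤ i' → (i' : ℕ∞) ≤ η r' → 1 ≤ j' →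
      xb r i j = xb r' i' j' → r = r' ∧ i = i' ∧ j = j')
    (hsurj : ∀ x : X, (∃ r : ℕ, 1 ≤ r ∧ r ≤ κ ∧ x = xc r) ∨
      ∃ r i j : ℕ, 1 ≤ r ∧ r ≤ κ ∧ 1 ≤ i ∧ (i : ℕ∞) ≤ η r ∧ 1 ≤ j ∧ x = xb r i j)
    (φ : X → X)
    (hφ₁ : ∀ r i j : ℕ, 1 ≤ r → r ≤ κ → 1 ≤ i → (i : ℕ∞) ≤ η r → 1 ≤ j →
      φ (xb r i (j + 1)) = xb r i j)
    (hφ₂ : ∀ r i : ℕ, 1 ≤ r → r ≤ κ → 1 ≤ i → (i : ℕ∞) ≤ η r → φ (xb r i 1) = xc r)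
    (hφ₃ : ∀ r : ℕ, 1 ≤ r → r ≤ κ → φ (xc (Φ₂ ((r : ℤ) + 1))) = xc r)
    (μ : Measure X)
    (hμ : ∀ x : X, 0 < μ {x} ∧ μ {x} < ⊤)
    (m k : ℕ) (hm : 1 ≤ m)
    (hfin : ∑ r ∈ Finset.Icc 1 κ,
        bsumE η r (fun i => ∑ j ∈ Finset.Icc 1 (m + k), μ {xb r i j}) < ⊤) :
    (∑ r ∈ Finset.Icc 1 κ, (μ {xc r}).toReal *
        ∑ p ∈ Finset.range (m + 1),
          (-1 : ℝ) ^ p * (m.choose p : ℝ) * hRN μ φ (p + k) (xc r) =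
      -∑ r ∈ Finset.Icc 1 κ, bsumR η r (fun i =>
        ∑ p ∈ Finset.range m,
          (-1 : ℝ) ^ p * ((m - 1).choose p : ℝ) * (μ {xb r i (p + k + 1)}).toReal)) ∧
    (-∑ r ∈ Finset.Icc 1 κ, bsumR η r (fun i =>
        ∑ p ∈ Finset.range m,
          (-1 : ℝ) ^ p * ((m - 1).choose p : ℝ) * (μ {xb r i (p + k + 1)}).toReal) =
      -∑ r ∈ Finset.Icc 1 κ, bsumR η r (fun i =>
        ∑ p ∈ Finset.range m,
          (-1 : ℝ) ^ p * ((m - 1).choose p : ℝ) * (μ {xb r i 1}).toReal *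
            hRN μ φ (p + k) (xb r i 1))) := by
  have : DiscreteMeasurableSpace X := ⟨hmeas⟩
  have hG : IsCycleWithBranches κ η xc xb φ := ⟨hinj₁, hinj₂, hinj₃, hsurj, hφ₁, hφ₂,
    fun s hs₁ hs₂ => by
      obtain ⟨r, hr₁, hr₂, rfl⟩ := exists_residue_add_one_eq hΦ₂ hs₁ hs₂
      exact hφ₃ r hr₁ hr₂ ▸ mem_circuit.mpr ⟨r, ⟨hr₁, hr₂⟩, rfl⟩⟩
  have h₀ : ∀ x, μ {x} ≠ 0 := fun x => (hμ x).1.ne'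
  have h_top : ∀ x, μ {x} ≠ ⊤ := fun x => (hμ x).2.ne
  have hlevel : ∀ j, 1 ≤ j → j ≤ m + k → μ (level κ η xb j) ≠ ⊤ :=
    fun j hj₁ hj₂ => hG.measure_level_ne_top hfin hj₁ hj₂
  refine ⟨(hG.sum_measure_mul_alternating_hRN_xc h₀ h_top hm hlevel).trans ?_, ?_⟩
  · rw [hG.sum_bsumR_measure_xb h_top (range m) (fun p => (-1 : ℝ) ^ p * ((m - 1).choose p : ℝ))
      (fun p _ => by omega) fun p hp => hlevel _ (by omega) (by grind)]
  · refine congrArg Neg.neg (sum_congr rfl fun r hr => bsumR_congr fun i hi =>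
      sum_congr rfl fun p _ => ?_)
    obtain ⟨hr₁, hr₂⟩ := mem_Icc.mp hr
    rw [mul_assoc ((-1 : ℝ) ^ p * _), hG.toReal_measure_xb_mul_hRN hr₁ hr₂ hi (h₀ _) (h_top _)]

theorem stmt5
    (κ : ℕ) (hκ : 1 ≤ κ)
    (Φ₂ : ℤ → ℕ)
    (hΦ₂ : ∀ q : ℤ, (1 ≤ Φ₂ q ∧ Φ₂ q ≤ κ) ∧ (κ : ℤ) ∣ q - (Φ₂ q : ℤ))
    (X : Type*) [MeasurableSpace X] [Countable X]
    (hmeas : ∀ s : Set X, MeasurableSet s)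
    (η : ℕ → ℕ∞)
    (hη : ∃ r : ℕ, 1 ≤ r ∧ r ≤ κ ∧ η r ≠ 0)
    (xc : ℕ → X) (xb : ℕ → ℕ → ℕ → X)
    (hinj₁ : ∀ r r' : ℕ, 1 ≤ r → r ≤ κ → 1 ≤ r' → r' ≤ κ → xc r = xc r' → r = r')
    (hinj₂ : ∀ r r' i j : ℕ, 1 ≤ r → r ≤ κ → 1 ≤ r' → r' ≤ κ → 1 ≤ i → (i : ℕ∞) ≤ η r' →
      1 ≤ j → xc r ≠ xb r' i j)
    (hinj₃ : ∀ r i j r' i' j' : ℕ, 1 ≤ r → r ≤ κ → 1 ≤ i → (i : ℕ∞) ≤ η r → 1 ≤ j →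
      1 ≤ r' → r' ≤ κ → 1 ≤ i' → (i' : ℕ∞) ≤ η r' → 1 ≤ j' →
      xb r i j = xb r' i' j' → r = r' ∧ i = i' ∧ j = j')
    (hsurj : ∀ x : X, (∃ r : ℕ, 1 ≤ r ∧ r ≤ κ ∧ x = xc r) ∨
      ∃ r i j : ℕ, 1 ≤ r ∧ r ≤ κ ∧ 1 ≤ i ∧ (i : ℕ∞) ≤ η r ∧ 1 ≤ j ∧ x = xb r i j)
    (φ : X → X)
    (hφ₁ : ∀ r i j : ℕ, 1 ≤ r → r ≤ κ → 1 ≤ i → (i : ℕ∞) ≤ η r → 1 ≤ j →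
      φ (xb r i (j + 1)) = xb r i j)
    (hφ₂ : ∀ r i : ℕ, 1 ≤ r → r ≤ κ → 1 ≤ i → (i : ℕ∞) ≤ η r → φ (xb r i 1) = xc r)
    (hφ₃ : ∀ r : ℕ, 1 ≤ r → r ≤ κ → φ (xc (Φ₂ ((r : ℤ) + 1))) = xc r)
    (μ : Measure X) [SigmaFinite μ]
    (hμ : ∀ x : X, 0 < μ {x} ∧ μ {x} < ⊤)
    (m k : ℕ) (hm : 1 ≤ m)
    (hfin : ∑ r ∈ Finset.Icc 1 κ,
        bsumE η r (fun i => ∑ j ∈ Finset.Icc 1 (m + k), μ {xb r i j}) < ⊤) :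
    (∑ r ∈ Finset.Icc 1 κ, (μ {xc r}).toReal *
        ∑ p ∈ Finset.range (m + 1),
          (-1 : ℝ) ^ p * (m.choose p : ℝ) * hRN μ φ (p + k) (xc r) =
      -∑ r ∈ Finset.Icc 1 κ, bsumR η r (fun i =>
        ∑ p ∈ Finset.range m,
          (-1 : ℝ) ^ p * ((m - 1).choose p : ℝ) * (μ {xb r i (p + k + 1)}).toReal)) ∧
    (-∑ r ∈ Finset.Icc 1 κ, bsumR η r (fun i =>
        ∑ p ∈ Finset.range m,
          (-1 : ℝ) ^ p * ((m - 1).choose p : ℝ) * (μ {xb r i (p + k + 1)}).toReal) =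
      -∑ r ∈ Finset.Icc 1 κ, bsumR η r (fun i =>
        ∑ p ∈ Finset.range m,
          (-1 : ℝ) ^ p * ((m - 1).choose p : ℝ) * (μ {xb r i 1}).toReal *
            hRN μ φ (p + k) (xb r i 1))) :=
  stmt5_general κ Φ₂ hΦ₂ X hmeas η xc xb hinj₁ hinj₂ hinj₃ hsurj φ hφ₁ hφ₂ hφ₃ μ hμ m k hm hfin
end
end

section
/- For every integer p ≥ κ, the conditional expectation of π_p² with respect to the σ-algebra φ^{−p}(F) equals F_p∘φ^p μ-almost everywhere; equivalently, on each atom A of φ^{−p}(F) the function F_p∘φ^p is constant with value (1/μ(A)) ∫_A π_p² dμ. -/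
/-!
Since every set is measurable, the integral over a countable set is the sum of `f x · μ{x}` over
its points, so the claim is a description of the fibres of `φ^p`. The fibre over a branch point
`x^r_{i,j}` is the single point `x^r_{i,j+p}`, and both sides equal `π_p(x^r_{i,j+p})²`.
Going `p` steps back from a circuit point `x_r` reaches the circuit point `x_{Φ₂(p+r)}` and the
branch points `x^s_{i,j}` with `j ≤ p` and `s + j ≡ p + r (mod κ)`; summing `π_p² μ` and `μ` over
these points gives the numerator and the denominator of `F_p(x_r)`.
-/

open MeasureTheory Finset

noncomputable section

/-- `π_p = π·(π∘φ)·(π∘φ²)⋯(π∘φ^{p-1})`, with `π_0 = 1`. -/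
def piProd {X : Type*} (φ : X → X) (π : X → ℝ) (p : ℕ) (x : X) : ℝ :=
  ∏ q ∈ Finset.range p, π (φ^[q] x)

section DiscreteMeasure

variable {X E : Type*} [MeasurableSpace X] [DiscreteMeasurableSpace X] [NormedAddCommGroup E]
  [NormedSpace ℝ E] [CompleteSpace E] {μ : Measure X} {f : X → E}

lemma setIntegral_image_eq_tsum_indicator {ι : Type*} [Countable ι] {g : ι → X} {S : Set ι}
    (hg : S.InjOn g) (hf : IntegrableOn f (g '' S) μ) :
    ∫ z in g '' S, f z ∂μ = ∑' i, S.indicator (fun i => μ.real {g i} • f (g i)) i := by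
  rw [setIntegral_countable f (S.to_countable.image g) hf,
    tsum_image (fun x => μ.real {x} • f x) hg,
    _root_.tsum_subtype S (fun i => μ.real {g i} • f (g i))]

lemma setIntegral_insert {a : X} {s : Set X} (ha : a ∉ s) (hf : IntegrableOn f (insert a s) μ) :
    ∫ z in insert a s, f z ∂μ = μ.real {a} • f a + ∫ z in s, f z ∂μ := by
  rw [Set.insert_eq, setIntegral_union (Set.disjoint_singleton_left.2 ha) .of_discrete
    (hf.mono_set (Set.singleton_subset_iff.2 (Set.mem_insert a s)))
    (hf.mono_set (Set.subset_insert a s)), integral_singleton]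

end DiscreteMeasure

lemma abs_piProd_le {X : Type*} {φ : X → X} {π : X → ℝ} {B : ℝ} (hB : ∀ x, |π x| ≤ B) (p : ℕ)
    (x : X) : |piProd φ π p x| ≤ B ^ p := by
  rw [piProd, abs_prod]
  exact (prod_le_prod (fun _ _ => abs_nonneg _) fun q _ => hB _).trans_eq (by simp)

lemma Int.sub_modEq_iff_modEq_add {n a b c : ℤ} : a - b ≡ c [ZMOD n] ↔ a ≡ b + c [ZMOD n] := by
  rw [Int.modEq_iff_dvd, Int.modEq_iff_dvd, sub_sub_eq_add_sub, add_comm c b]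

def IsResidueRep (κ : ℕ) (Φ₂ : ℤ → ℕ) : Prop :=
  ∀ q : ℤ, (1 ≤ Φ₂ q ∧ Φ₂ q ≤ κ) ∧ (κ : ℤ) ∣ q - (Φ₂ q : ℤ)

namespace IsResidueRep

variable {κ : ℕ} {Φ₂ : ℤ → ℕ}

lemma modEq (h : IsResidueRep κ Φ₂) (a : ℤ) : (Φ₂ a : ℤ) ≡ a [ZMOD κ] :=
  Int.modEq_iff_dvd.2 (h a).2

lemma eq_of_modEq (h : IsResidueRep κ Φ₂) {a : ℤ} {t : ℕ} (ht₁ : 1 ≤ t) (ht₂ : t ≤ κ)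
    (hat : a ≡ t [ZMOD κ]) : Φ₂ a = t := by
  have hdvd : (κ : ℤ) ∣ t - Φ₂ a := Int.modEq_iff_dvd.1 ((h.modEq a).trans hat)
  have := (h a).1
  have := Int.eq_zero_of_abs_lt_dvd hdvd (abs_lt.2 ⟨by omega, by omega⟩)
  omega

lemma apply_natCast (h : IsResidueRep κ Φ₂) {t : ℕ} (ht₁ : 1 ≤ t) (ht₂ : t ≤ κ) :
    Φ₂ t = t :=
  h.eq_of_modEq ht₁ ht₂ rfl

lemma eq_iff_modEq (h : IsResidueRep κ Φ₂) {a b : ℤ} : Φ₂ a = Φ₂ b ↔ a ≡ b [ZMOD κ] :=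
  ⟨fun hab => (h.modEq a).symm.trans (hab ▸ h.modEq b),
    fun hab => h.eq_of_modEq (h b).1.1 (h b).1.2 (hab.trans (h.modEq b).symm)⟩

end IsResidueRep

def branchIdx (η : ℕ → ℕ∞) (r : ℕ) : Set ℕ := {i : ℕ | 1 ≤ i ∧ (i : ℕ∞) ≤ η r}

/-- A pair `q = (j, s)` stands for the level-`j` points `x^s_{i,j}` of the branches at `x_s`. -/
def branchPoints {X : Type*} (η : ℕ → ℕ∞) (xb : ℕ → ℕ → ℕ → X) (T : Finset (ℕ × ℕ)) :
    Set X :=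
  ⋃ q ∈ T, (fun i => xb q.2 i q.1) '' branchIdx η q.2

def circuitFibreIdx (κ : ℕ) (Φ₂ : ℤ → ℕ) (p r : ℕ) : Finset (ℕ × ℕ) :=
  (Icc 1 p ×ˢ Icc 1 κ).filter fun q => Φ₂ ((p + r : ℕ) : ℤ) = Φ₂ ((q.2 + q.1 : ℕ) : ℤ)

lemma mem_circuitFibreIdx {κ : ℕ} {Φ₂ : ℤ → ℕ} {p r : ℕ} {q : ℕ × ℕ} :
    q ∈ circuitFibreIdx κ Φ₂ p r ↔ (1 ≤ q.1 ∧ q.1 ≤ p) ∧ (1 ≤ q.2 ∧ q.2 ≤ κ) ∧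
      Φ₂ ((p + r : ℕ) : ℤ) = Φ₂ ((q.2 + q.1 : ℕ) : ℤ) := by
  simp only [circuitFibreIdx, mem_filter, mem_product, mem_Icc, and_assoc]

lemma circuitFibreIdx_valid {κ : ℕ} {Φ₂ : ℤ → ℕ} {p r : ℕ} :
    ∀ q ∈ circuitFibreIdx κ Φ₂ p r, 1 ≤ q.1 ∧ 1 ≤ q.2 ∧ q.2 ≤ κ := fun _ hq => by
  obtain ⟨⟨h₁, -⟩, ⟨h₂, h₃⟩, -⟩ := mem_circuitFibreIdx.1 hq
  exact ⟨h₁, h₂, h₃⟩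

structure CircuitWithBranches {X : Type*} (κ : ℕ) (Φ₂ : ℤ → ℕ) (η : ℕ → ℕ∞) (xc : ℕ → X)
    (xb : ℕ → ℕ → ℕ → X) (φ : X → X) : Prop where
  residue : IsResidueRep κ Φ₂
  xc_inj : ∀ r r' : ℕ, 1 ≤ r → r ≤ κ → 1 ≤ r' → r' ≤ κ → xc r = xc r' → r = r'
  xc_ne_xb : ∀ r r' i j : ℕ, 1 ≤ r → r ≤ κ → 1 ≤ r' → r' ≤ κ → 1 ≤ i → (i : ℕ∞) ≤ η r' →
    1 ≤ j → xc r ≠ xb r' i j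
  xb_inj : ∀ r i j r' i' j' : ℕ, 1 ≤ r → r ≤ κ → 1 ≤ i → (i : ℕ∞) ≤ η r → 1 ≤ j →
    1 ≤ r' → r' ≤ κ → 1 ≤ i' → (i' : ℕ∞) ≤ η r' → 1 ≤ j' →
    xb r i j = xb r' i' j' → r = r' ∧ i = i' ∧ j = j'
  eq_xc_or_xb : ∀ x : X, (∃ r : ℕ, 1 ≤ r ∧ r ≤ κ ∧ x = xc r) ∨
    ∃ r i j : ℕ, 1 ≤ r ∧ r ≤ κ ∧ 1 ≤ i ∧ (i : ℕ∞) ≤ η r ∧ 1 ≤ j ∧ x = xb r i j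
  map_xb_succ : ∀ r i j : ℕ, 1 ≤ r → r ≤ κ → 1 ≤ i → (i : ℕ∞) ≤ η r → 1 ≤ j →
    φ (xb r i (j + 1)) = xb r i j
  map_xb_one : ∀ r i : ℕ, 1 ≤ r → r ≤ κ → 1 ≤ i → (i : ℕ∞) ≤ η r → φ (xb r i 1) = xc r
  map_xc : ∀ r : ℕ, 1 ≤ r → r ≤ κ → φ (xc (Φ₂ ((r : ℤ) + 1))) = xc r

namespace CircuitWithBranches

variable {X : Type*} {κ : ℕ} {Φ₂ : ℤ → ℕ} {η : ℕ → ℕ∞} {xc : ℕ → X} {xb : ℕ → ℕ → ℕ → X}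
  {φ : X → X} (G : CircuitWithBranches κ Φ₂ η xc xb φ)
include G

lemma xc_eq_xc_iff (a b : ℤ) : xc (Φ₂ a) = xc (Φ₂ b) ↔ a ≡ b [ZMOD κ] := by
  rw [← G.residue.eq_iff_modEq]
  exact ⟨G.xc_inj _ _ (G.residue a).1.1 (G.residue a).1.2 (G.residue b).1.1 (G.residue b).1.2,
    congrArg xc⟩

lemma xc_natCast {t : ℕ} (ht₁ : 1 ≤ t) (ht₂ : t ≤ κ) : xc t = xc (Φ₂ t) := by
  rw [G.residue.apply_natCast ht₁ ht₂]

lemma iterate_xc (a : ℤ) (q : ℕ) : φ^[q] (xc (Φ₂ a)) = xc (Φ₂ (a - q)) := by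
  induction q with
  | zero => simp
  | succ q ih =>
    obtain ⟨⟨h₁, h₂⟩, -⟩ := G.residue (a - (q + 1 : ℕ))
    have hsucc : Φ₂ (Φ₂ (a - (q + 1 : ℕ)) + 1) = Φ₂ (a - q) :=
      G.residue.eq_iff_modEq.2 <| by
        convert (G.residue.modEq (a - (q + 1 : ℕ))).add_right 1 using 1
        push_cast
        ring
    rw [Function.iterate_succ_apply', ih, ← hsucc, G.map_xc _ h₁ h₂]

lemma iterate_xb_add {r i j : ℕ} (hr₁ : 1 ≤ r) (hr₂ : r ≤ κ) (hi : i ∈ branchIdx η r)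
    (hj : 1 ≤ j) (q : ℕ) : φ^[q] (xb r i (j + q)) = xb r i j := by
  induction q generalizing j with
  | zero => rfl
  | succ q ih =>
    rw [show j + (q + 1) = (j + 1) + q by omega, Function.iterate_succ_apply', ih (by omega)]
    exact G.map_xb_succ r i j hr₁ hr₂ hi.1 hi.2 hj

lemma iterate_xb_self {r i j : ℕ} (hr₁ : 1 ≤ r) (hr₂ : r ≤ κ) (hi : i ∈ branchIdx η r)
    (hj : 1 ≤ j) : φ^[j] (xb r i j) = xc r := by
  obtain ⟨j, rfl⟩ := Nat.exists_eq_add_of_le hj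
  rw [add_comm 1 j, Function.iterate_succ_apply', add_comm j 1,
    G.iterate_xb_add hr₁ hr₂ hi le_rfl]
  exact G.map_xb_one r i hr₁ hr₂ hi.1 hi.2

lemma iterate_xb_of_le {r i j p : ℕ} (hr₁ : 1 ≤ r) (hr₂ : r ≤ κ) (hi : i ∈ branchIdx η r)
    (hj : 1 ≤ j) (hjp : j ≤ p) : φ^[p] (xb r i j) = xc (Φ₂ (((r + j : ℕ) : ℤ) - p)) := by
  obtain ⟨d, rfl⟩ := Nat.exists_eq_add_of_le' hjp
  rw [Function.iterate_add_apply, G.iterate_xb_self hr₁ hr₂ hi hj, G.xc_natCast hr₁ hr₂,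
    G.iterate_xc]
  congr 2
  push_cast
  ring

lemma xc_residue_ne_xb (a : ℤ) {r i j : ℕ} (hr₁ : 1 ≤ r) (hr₂ : r ≤ κ) (hi : i ∈ branchIdx η r)
    (hj : 1 ≤ j) : xc (Φ₂ a) ≠ xb r i j :=
  G.xc_ne_xb _ r i j (G.residue a).1.1 (G.residue a).1.2 hr₁ hr₂ hi.1 hi.2 hj

lemma preimage_xb {r i j : ℕ} (hr₁ : 1 ≤ r) (hr₂ : r ≤ κ) (hi : i ∈ branchIdx η r)
    (hj : 1 ≤ j) (p : ℕ) : (φ^[p]) ⁻¹' {xb r i j} = {xb r i (j + p)} := by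
  ext z
  simp only [Set.mem_preimage, Set.mem_singleton_iff]
  refine ⟨fun hz => ?_, fun hz => hz ▸ G.iterate_xb_add hr₁ hr₂ hi hj p⟩
  rcases G.eq_xc_or_xb z with ⟨t, ht₁, ht₂, rfl⟩ | ⟨s, i', j', hs₁, hs₂, hi'₁, hi'₂, hj', rfl⟩
  · rw [G.xc_natCast ht₁ ht₂, G.iterate_xc] at hz
    exact absurd hz (G.xc_residue_ne_xb _ hr₁ hr₂ hi hj)
  rcases le_or_gt j' p with hj'p | hpj'
  · rw [G.iterate_xb_of_le hs₁ hs₂ ⟨hi'₁, hi'₂⟩ hj' hj'p] at hz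
    exact absurd hz (G.xc_residue_ne_xb _ hr₁ hr₂ hi hj)
  · obtain ⟨j'', rfl⟩ : ∃ j'', j' = j'' + p := ⟨j' - p, by omega⟩
    rw [G.iterate_xb_add hs₁ hs₂ ⟨hi'₁, hi'₂⟩ (by omega)] at hz
    obtain ⟨rfl, rfl, rfl⟩ :=
      G.xb_inj _ _ _ _ _ _ hs₁ hs₂ hi'₁ hi'₂ (by omega) hr₁ hr₂ hi.1 hi.2 hj hz
    rfl

section branchPoints

variable {T : Finset (ℕ × ℕ)} (hT : ∀ q ∈ T, 1 ≤ q.1 ∧ 1 ≤ q.2 ∧ q.2 ≤ κ)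
include hT

lemma injOn_branchIdx {q : ℕ × ℕ} (hq : q ∈ T) :
    Set.InjOn (fun i => xb q.2 i q.1) (branchIdx η q.2) := by
  obtain ⟨h₁, h₂, h₃⟩ := hT q hq
  intro i hi i' hi' h
  exact (G.xb_inj _ _ _ _ _ _ h₂ h₃ hi.1 hi.2 h₁ h₂ h₃ hi'.1 hi'.2 h₁ h).2.1

lemma pairwiseDisjoint_branchIdx_image :
    (T : Set (ℕ × ℕ)).PairwiseDisjoint fun q => (fun i => xb q.2 i q.1) '' branchIdx η q.2 := by
  intro q hq q' hq' hne
  obtain ⟨h₁, h₂, h₃⟩ := hT q hq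
  obtain ⟨h₁', h₂', h₃'⟩ := hT q' hq'
  refine Set.disjoint_left.2 ?_
  rintro _ ⟨i, hi, rfl⟩ ⟨i', hi', h⟩
  obtain ⟨hs, -, hj⟩ := G.xb_inj _ _ _ _ _ _ h₂' h₃' hi'.1 hi'.2 h₁' h₂ h₃ hi.1 hi.2 h₁ h
  exact hne (Prod.ext hj.symm hs.symm)

lemma xc_notMem_branchPoints (a : ℤ) : xc (Φ₂ a) ∉ branchPoints η xb T := by
  simp only [branchPoints, Set.mem_iUnion, Set.mem_image, not_exists, not_and]
  intro q hq i hi h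
  obtain ⟨h₁, h₂, h₃⟩ := hT q hq
  exact G.xc_residue_ne_xb a h₂ h₃ hi h₁ h.symm

lemma xb_mem_branchPoints_iff {s i j : ℕ} (hs₁ : 1 ≤ s) (hs₂ : s ≤ κ) (hi : i ∈ branchIdx η s)
    (hj : 1 ≤ j) : xb s i j ∈ branchPoints η xb T ↔ (j, s) ∈ T := by
  simp only [branchPoints, Set.mem_iUnion, Set.mem_image]
  refine ⟨?_, fun h => ⟨_, h, i, hi, rfl⟩⟩
  rintro ⟨q, hq, i', hi', h⟩
  obtain ⟨h₁, h₂, h₃⟩ := hT q hq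
  obtain ⟨rfl, -, rfl⟩ := G.xb_inj _ _ _ _ _ _ h₂ h₃ hi'.1 hi'.2 h₁ hs₁ hs₂ hi.1 hi.2 hj h
  exact hq

end branchPoints

lemma preimage_xc {r : ℕ} (hr₁ : 1 ≤ r) (hr₂ : r ≤ κ) (p : ℕ) :
    (φ^[p]) ⁻¹' {xc r} = insert (xc (Φ₂ ((p + r : ℕ) : ℤ)))
      (branchPoints η xb (circuitFibreIdx κ Φ₂ p r)) := by
  have hT := circuitFibreIdx_valid (κ := κ) (Φ₂ := Φ₂) (p := p) (r := r)
  ext z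
  simp only [Set.mem_preimage, Set.mem_singleton_iff, Set.mem_insert_iff]
  rw [G.xc_natCast hr₁ hr₂]
  rcases G.eq_xc_or_xb z with ⟨t, ht₁, ht₂, rfl⟩ | ⟨s, i, j, hs₁, hs₂, hi₁, hi₂, hj, rfl⟩
  · rw [G.xc_natCast ht₁ ht₂, G.iterate_xc, G.xc_eq_xc_iff, G.xc_eq_xc_iff,
      or_iff_left (G.xc_notMem_branchPoints hT _), Int.sub_modEq_iff_modEq_add]
    push_cast
    rfl
  rw [G.xb_mem_branchPoints_iff hT hs₁ hs₂ ⟨hi₁, hi₂⟩ hj, mem_circuitFibreIdx,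
    or_iff_right (G.xc_residue_ne_xb _ hs₁ hs₂ ⟨hi₁, hi₂⟩ hj).symm]
  rcases le_or_gt j p with hjp | hpj
  · rw [G.iterate_xb_of_le hs₁ hs₂ ⟨hi₁, hi₂⟩ hj hjp, G.xc_eq_xc_iff, G.residue.eq_iff_modEq,
      Int.sub_modEq_iff_modEq_add]
    simp only [hj, hjp, hs₁, hs₂, and_self, true_and]
    push_cast
    exact ⟨Int.ModEq.symm, Int.ModEq.symm⟩
  · obtain ⟨j', rfl⟩ : ∃ j', j = j' + p := ⟨j - p, by omega⟩
    rw [G.iterate_xb_add hs₁ hs₂ ⟨hi₁, hi₂⟩ (by omega)]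
    exact iff_of_false (G.xc_residue_ne_xb _ hs₁ hs₂ ⟨hi₁, hi₂⟩ (by omega)).symm
      fun h => absurd h.1.2 (by omega)

lemma setIntegral_preimage_xc [MeasurableSpace X] [DiscreteMeasurableSpace X] {μ : Measure X}
    {f : X → ℝ} {r : ℕ} (hr₁ : 1 ≤ r) (hr₂ : r ≤ κ) (p : ℕ)
    (hf : IntegrableOn f ((φ^[p]) ⁻¹' {xc r}) μ) :
    ∫ z in (φ^[p]) ⁻¹' {xc r}, f z ∂μ =
      f (xc (Φ₂ ((p + r : ℕ) : ℤ))) * μ.real {xc (Φ₂ ((p + r : ℕ) : ℤ))} +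
        ∑ j ∈ Icc 1 p, ∑ s ∈ {s ∈ Icc 1 κ | Φ₂ ((p + r : ℕ) : ℤ) = Φ₂ ((s + j : ℕ) : ℤ)},
          bsumR η s (fun i => f (xb s i j) * μ.real {xb s i j}) := by
  have hT := circuitFibreIdx_valid (κ := κ) (Φ₂ := Φ₂) (p := p) (r := r)
  rw [G.preimage_xc hr₁ hr₂ p] at hf ⊢
  have hfq : ∀ q ∈ circuitFibreIdx κ Φ₂ p r,
      IntegrableOn f ((fun i => xb q.2 i q.1) '' branchIdx η q.2) μ := fun q hq =>
    hf.mono_set ((Set.subset_biUnion_of_mem (u := fun q =>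
      (fun i => xb q.2 i q.1) '' branchIdx η q.2) hq).trans (Set.subset_insert _ _))
  rw [setIntegral_insert (G.xc_notMem_branchPoints hT _) hf, smul_eq_mul, mul_comm, branchPoints,
    integral_biUnion_finset _ (fun _ _ => .of_discrete) (G.pairwiseDisjoint_branchIdx_image hT) hfq,
    sum_congr rfl fun q hq =>
      setIntegral_image_eq_tsum_indicator (G.injOn_branchIdx hT hq) (hfq q hq),
    circuitFibreIdx, sum_filter, sum_product]
  simp only [sum_filter, bsumR, branchIdx, smul_eq_mul, mul_comm]

end CircuitWithBranches

theorem stmt19_general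
    (κ : ℕ)
    (Φ₂ : ℤ → ℕ)
    (hΦ₂ : ∀ q : ℤ, (1 ≤ Φ₂ q ∧ Φ₂ q ≤ κ) ∧ (κ : ℤ) ∣ q - (Φ₂ q : ℤ))
    (X : Type*) [MeasurableSpace X]
    (hmeas : ∀ s : Set X, MeasurableSet s)
    (η : ℕ → ℕ∞)
    (xc : ℕ → X) (xb : ℕ → ℕ → ℕ → X)
    (hinj₁ : ∀ r r' : ℕ, 1 ≤ r → r ≤ κ → 1 ≤ r' → r' ≤ κ → xc r = xc r' → r = r')
    (hinj₂ : ∀ r r' i j : ℕ, 1 ≤ r → r ≤ κ → 1 ≤ r' → r' ≤ κ → 1 ≤ i → (i : ℕ∞) ≤ η r' →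
      1 ≤ j → xc r ≠ xb r' i j)
    (hinj₃ : ∀ r i j r' i' j' : ℕ, 1 ≤ r → r ≤ κ → 1 ≤ i → (i : ℕ∞) ≤ η r → 1 ≤ j →
      1 ≤ r' → r' ≤ κ → 1 ≤ i' → (i' : ℕ∞) ≤ η r' → 1 ≤ j' →
      xb r i j = xb r' i' j' → r = r' ∧ i = i' ∧ j = j')
    (hsurj : ∀ x : X, (∃ r : ℕ, 1 ≤ r ∧ r ≤ κ ∧ x = xc r) ∨
      ∃ r i j : ℕ, 1 ≤ r ∧ r ≤ κ ∧ 1 ≤ i ∧ (i : ℕ∞) ≤ η r ∧ 1 ≤ j ∧ x = xb r i j)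
    (φ : X → X)
    (hφ₁ : ∀ r i j : ℕ, 1 ≤ r → r ≤ κ → 1 ≤ i → (i : ℕ∞) ≤ η r → 1 ≤ j →
      φ (xb r i (j + 1)) = xb r i j)
    (hφ₂ : ∀ r i : ℕ, 1 ≤ r → r ≤ κ → 1 ≤ i → (i : ℕ∞) ≤ η r → φ (xb r i 1) = xc r)
    (hφ₃ : ∀ r : ℕ, 1 ≤ r → r ≤ κ → φ (xc (Φ₂ ((r : ℤ) + 1))) = xc r)
    (μ : Measure X)
    (hμ : ∀ x : X, 0 < μ {x} ∧ μ {x} < ⊤)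
    (π : X → ℝ) (hπ : ∃ B : ℝ, ∀ x : X, |π x| ≤ B)
    (hpre : ∀ (p : ℕ) (x : X), μ ((φ^[p]) ⁻¹' {x}) < ⊤)
    (F : ℕ → X → ℝ)
    (hFb : ∀ p r i j : ℕ, 1 ≤ r → r ≤ κ → 1 ≤ i → (i : ℕ∞) ≤ η r → 1 ≤ j →
      F p (xb r i j) = (piProd φ π p (xb r i (j + p))) ^ 2)
    (hFc : ∀ p r : ℕ, 1 ≤ r → r ≤ κ →
      F p (xc r) =
        ((piProd φ π p (xc (Φ₂ ((p + r : ℕ) : ℤ)))) ^ 2 *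
            (μ {xc (Φ₂ ((p + r : ℕ) : ℤ))}).toReal +
          ∑ j ∈ Finset.Icc 1 p,
            ∑ s ∈ {s ∈ Finset.Icc 1 κ | Φ₂ ((p + r : ℕ) : ℤ) = Φ₂ ((s + j : ℕ) : ℤ)},
              bsumR η s (fun i => (piProd φ π p (xb s i j)) ^ 2 * (μ {xb s i j}).toReal)) /
        ((μ {xc (Φ₂ ((p + r : ℕ) : ℤ))}).toReal +
          ∑ j ∈ Finset.Icc 1 p,
            ∑ s ∈ {s ∈ Finset.Icc 1 κ | Φ₂ ((p + r : ℕ) : ℤ) = Φ₂ ((s + j : ℕ) : ℤ)},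
              bsumR η s (fun i => (μ {xb s i j}).toReal)))
    (p : ℕ) :
    ∀ x : X, ((φ^[p]) ⁻¹' {x}).Nonempty →
      ∀ y ∈ (φ^[p]) ⁻¹' {x},
        F p (φ^[p] y) =
          (∫ z in (φ^[p]) ⁻¹' {x}, (piProd φ π p z) ^ 2 ∂μ) /
            (μ ((φ^[p]) ⁻¹' {x})).toReal := by
  intro x _ y hy
  have : DiscreteMeasurableSpace X := ⟨hmeas⟩
  have G : CircuitWithBranches κ Φ₂ η xc xb φ := ⟨hΦ₂, hinj₁, hinj₂, hinj₃, hsurj, hφ₁, hφ₂, hφ₃⟩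
  obtain ⟨B, hB⟩ := hπ
  have hint : IntegrableOn (fun z => piProd φ π p z ^ 2) ((φ^[p]) ⁻¹' {x}) μ :=
    .of_bound (hpre p x) Measurable.of_discrete.aestronglyMeasurable ((B ^ p) ^ 2) <|
      ae_of_all _ fun z => by
        rw [Real.norm_eq_abs, abs_pow]
        exact pow_le_pow_left₀ (abs_nonneg _) (abs_piProd_le hB p z) 2
  rw [show φ^[p] y = x from hy]
  rcases hsurj x with ⟨r, hr₁, hr₂, rfl⟩ | ⟨r, i, j, hr₁, hr₂, hi₁, hi₂, hj, rfl⟩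
  · have hvol := G.setIntegral_preimage_xc (f := fun _ => (1 : ℝ)) hr₁ hr₂ p
      (integrableOn_const (hpre p _).ne)
    simp only [setIntegral_const, smul_eq_mul, mul_one, one_mul] at hvol
    rw [measureReal_def] at hvol
    rw [hFc p r hr₁ hr₂, G.setIntegral_preimage_xc hr₁ hr₂ p hint, hvol]
    rfl
  · have hmass : μ.real {xb r i (j + p)} ≠ 0 :=
      (measureReal_ne_zero_iff (hμ _).2.ne).2 (hμ _).1.ne'
    rw [G.preimage_xb hr₁ hr₂ ⟨hi₁, hi₂⟩ hj p, integral_singleton, smul_eq_mul, ← measureReal_def,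
      hFb p r i j hr₁ hr₂ hi₁ hi₂ hj, mul_div_cancel_left₀ _ hmass]

theorem stmt19
    (κ : ℕ) (hκ : 1 ≤ κ)
    (Φ₂ : ℤ → ℕ)
    (hΦ₂ : ∀ q : ℤ, (1 ≤ Φ₂ q ∧ Φ₂ q ≤ κ) ∧ (κ : ℤ) ∣ q - (Φ₂ q : ℤ))
    (X : Type*) [MeasurableSpace X] [Countable X]
    (hmeas : ∀ s : Set X, MeasurableSet s)
    (η : ℕ → ℕ∞)
    (hη : ∃ r : ℕ, 1 ≤ r ∧ r ≤ κ ∧ η r ≠ 0)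
    (xc : ℕ → X) (xb : ℕ → ℕ → ℕ → X)
    (hinj₁ : ∀ r r' : ℕ, 1 ≤ r → r ≤ κ → 1 ≤ r' → r' ≤ κ → xc r = xc r' → r = r')
    (hinj₂ : ∀ r r' i j : ℕ, 1 ≤ r → r ≤ κ → 1 ≤ r' → r' ≤ κ → 1 ≤ i → (i : ℕ∞) ≤ η r' →
      1 ≤ j → xc r ≠ xb r' i j)
    (hinj₃ : ∀ r i j r' i' j' : ℕ, 1 ≤ r → r ≤ κ → 1 ≤ i → (i : ℕ∞) ≤ η r → 1 ≤ j →
      1 ≤ r' → r' ≤ κ → 1 ≤ i' → (i' : ℕ∞) ≤ η r' → 1 ≤ j' →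
      xb r i j = xb r' i' j' → r = r' ∧ i = i' ∧ j = j')
    (hsurj : ∀ x : X, (∃ r : ℕ, 1 ≤ r ∧ r ≤ κ ∧ x = xc r) ∨
      ∃ r i j : ℕ, 1 ≤ r ∧ r ≤ κ ∧ 1 ≤ i ∧ (i : ℕ∞) ≤ η r ∧ 1 ≤ j ∧ x = xb r i j)
    (φ : X → X)
    (hφ₁ : ∀ r i j : ℕ, 1 ≤ r → r ≤ κ → 1 ≤ i → (i : ℕ∞) ≤ η r → 1 ≤ j →
      φ (xb r i (j + 1)) = xb r i j)
    (hφ₂ : ∀ r i : ℕ, 1 ≤ r → r ≤ κ → 1 ≤ i → (i : ℕ∞) ≤ η r → φ (xb r i 1) = xc r)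
    (hφ₃ : ∀ r : ℕ, 1 ≤ r → r ≤ κ → φ (xc (Φ₂ ((r : ℤ) + 1))) = xc r)
    (μ : Measure X) [SigmaFinite μ]
    (hμ : ∀ x : X, 0 < μ {x} ∧ μ {x} < ⊤)
    (π : X → ℝ) (hπ : ∃ B : ℝ, ∀ x : X, |π x| ≤ B)
    (hpre : ∀ (p : ℕ) (x : X), μ ((φ^[p]) ⁻¹' {x}) < ⊤)
    (F : ℕ → X → ℝ)
    (hFb : ∀ p r i j : ℕ, 1 ≤ r → r ≤ κ → 1 ≤ i → (i : ℕ∞) ≤ η r → 1 ≤ j →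
      F p (xb r i j) = (piProd φ π p (xb r i (j + p))) ^ 2)
    (hFc : ∀ p r : ℕ, 1 ≤ r → r ≤ κ →
      F p (xc r) =
        ((piProd φ π p (xc (Φ₂ ((p + r : ℕ) : ℤ)))) ^ 2 *
            (μ {xc (Φ₂ ((p + r : ℕ) : ℤ))}).toReal +
          ∑ j ∈ Finset.Icc 1 p,
            ∑ s ∈ {s ∈ Finset.Icc 1 κ | Φ₂ ((p + r : ℕ) : ℤ) = Φ₂ ((s + j : ℕ) : ℤ)},
              bsumR η s (fun i => (piProd φ π p (xb s i j)) ^ 2 * (μ {xb s i j}).toReal)) /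
        ((μ {xc (Φ₂ ((p + r : ℕ) : ℤ))}).toReal +
          ∑ j ∈ Finset.Icc 1 p,
            ∑ s ∈ {s ∈ Finset.Icc 1 κ | Φ₂ ((p + r : ℕ) : ℤ) = Φ₂ ((s + j : ℕ) : ℤ)},
              bsumR η s (fun i => (μ {xb s i j}).toReal)))
    (p : ℕ) (hp : κ ≤ p) :
    ∀ x : X, ((φ^[p]) ⁻¹' {x}).Nonempty →
      ∀ y ∈ (φ^[p]) ⁻¹' {x},
        F p (φ^[p] y) =
          (∫ z in (φ^[p]) ⁻¹' {x}, (piProd φ π p z) ^ 2 ∂μ) /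
            (μ ((φ^[p]) ⁻¹' {x})).toReal :=
  stmt19_general κ Φ₂ hΦ₂ X hmeas η xc xb hinj₁ hinj₂ hinj₃ hsurj φ hφ₁ hφ₂ hφ₃ μ hμ π hπ hpre F hFb
    hFc p
end
end
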